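/- Fix real numbers s > σ > 0 and β ∈ ℝ. There exist constants 0 < c ≤ C, depending only on s, σ, β, such that for every κ ≥ 2 and every Schwartz function q : ℝ → ℂ, setting I_κ := [1, κ/2] ∪ [2κ, ∞), one has c · ‖q‖²_{E^{σ+β}_{σ,1}} ≤ ∫_{I_κ} ‖q‖²_{E^{σ+β}_{s,ϰ}} · ϰ^{2β} dϰ/ϰ ≤ C · ‖q‖²_{E^{σ+β}_{σ,1}}. -/

import Mathlib

open MeasureTheory

/-- The Fourier transform, normalized by `q̂(ξ) = (2π)^{-1/2} ∫ e^{-iξx} q(x) dx`. -/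
noncomputable def fhat (f : ℝ → ℂ) (ξ : ℝ) : ℂ :=
  ((Real.sqrt (2 * Real.pi) : ℂ))⁻¹
    * ∫ x : ℝ, Complex.exp (-(Complex.I * (ξ : ℂ) * (x : ℂ))) * f x

/-- The squared `E^{σ'}_{s,ϰ}` norm:
`‖q‖²_{E^{σ'}_{s,ϰ}} = ∫ ϰ^{2(s-σ')} |ξ|^{2σ'} (4ϰ²+ξ²)^{-s} |q̂(ξ)|² dξ`. -/
noncomputable def Esq (s σ' ϰ : ℝ) (q : ℝ → ℂ) : ℝ :=
  ∫ ξ : ℝ, ϰ ^ (2 * (s - σ')) * |ξ| ^ (2 * σ') * (4 * ϰ ^ 2 + ξ ^ 2) ^ (-s)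
    * ‖fhat q ξ‖ ^ 2


/-!
Multiplying `‖q‖²_{E^{σ+β}_{s,ϰ}}` by `ϰ^{2β}/ϰ` gives `∫ |ξ|^{2(σ+β)} |q̂(ξ)|² K(ϰ, ξ) dξ`
with `K(ϰ, ξ) = ϰ^{2(s-σ)} (4ϰ² + ξ²)^{-s} / ϰ`, so by Tonelli the theorem reduces to
`∫_{I_κ} K(ϰ, ξ) dϰ ≍ (4 + ξ²)^{-σ}` uniformly in `κ` and `ξ`. Put `m = max 1 |ξ|`.
For the upper bound split `[1, ∞)` at `m`, where `K` is dominated by `ϰ^{2(s-σ)-1} m^{-2s}`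
and by `4^{-s} ϰ^{-2σ-1}` respectively. For the lower bound, `K ≳ m^{-2σ-1}` on `[m, 16m]`,
and `I_κ` always contains an interval of length `m` there: `[m, 2m]` if `4m ≤ κ`,
otherwise `[8m, 9m]`.
-/

open Set Filter
open scoped FourierTransform

lemma fhat_eq_fourier (f : ℝ → ℂ) (ξ : ℝ) :
    fhat f ξ = ((Real.sqrt (2 * Real.pi) : ℂ))⁻¹ * 𝓕 f (ξ / (2 * Real.pi)) := by
  rw [fhat, Real.fourier_real_eq]
  congr 1
  refine integral_congr_ae (Eventually.of_forall fun x => ?_)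
  simp only [Circle.smul_def, Real.fourierChar_apply, smul_eq_mul]
  congr 1
  push_cast
  field_simp

lemma exists_schwartzMap_eq_fhat (q : SchwartzMap ℝ ℂ) :
    ∃ F : SchwartzMap ℝ ℂ, ⇑F = fhat ⇑q := by
  have h2π : (2 * Real.pi)⁻¹ ≠ 0 := by positivity
  refine ⟨((Real.sqrt (2 * Real.pi) : ℂ))⁻¹ • SchwartzMap.compCLMOfContinuousLinearEquiv ℂ
    (LinearEquiv.smulOfNeZero ℝ ℝ _ h2π).toContinuousLinearEquiv (𝓕 q), ?_⟩
  ext ξ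
  rw [fhat_eq_fourier]
  simp [SchwartzMap.fourier_coe, div_eq_inv_mul]

namespace SchwartzMap

variable {D V : Type*} [NormedAddCommGroup D] [NormedSpace ℝ D] [MeasurableSpace D]
  [BorelSpace D] [SecondCountableTopology D] [NormedAddCommGroup V] [NormedSpace ℝ V]

lemma integrableOn_rpow_mul_norm_sq_compl_closedBall (μ : Measure D) [μ.HasTemperateGrowth]
    (F : SchwartzMap D V) (c : ℝ) :
    IntegrableOn (fun x => ‖x‖ ^ c * ‖F x‖ ^ 2) (Metric.closedBall 0 1)ᶜ μ := by
  set M := SchwartzMap.seminorm ℝ 0 0 F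
  refine Integrable.mono' ((F.integrable_pow_mul μ ⌈c⌉₊).const_mul M).integrableOn
    ((measurable_norm.pow_const c).mul
      (F.continuous.norm.pow 2).measurable).aestronglyMeasurable
    ((ae_restrict_mem measurableSet_closedBall.compl).mono fun x hx => ?_)
  have hx1 : 1 ≤ ‖x‖ := by
    simp only [mem_compl_iff, Metric.mem_closedBall, dist_zero_right, not_le] at hx
    exact hx.le
  have hc : ‖x‖ ^ c ≤ ‖x‖ ^ ⌈c⌉₊ := by
    rw [← Real.rpow_natCast]
    exact Real.rpow_le_rpow_of_exponent_le hx1 (Nat.le_ceil c)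
  rw [Real.norm_of_nonneg (by positivity)]
  calc ‖x‖ ^ c * ‖F x‖ ^ 2 = ‖x‖ ^ c * ‖F x‖ * ‖F x‖ := by ring
    _ ≤ ‖x‖ ^ ⌈c⌉₊ * ‖F x‖ * M := by gcongr; exact F.norm_le_seminorm ℝ x
    _ = M * (‖x‖ ^ ⌈c⌉₊ * ‖F x‖) := by ring

end SchwartzMap

lemma Real.sq_rpow {x : ℝ} (hx : 0 ≤ x) (z : ℝ) : (x ^ 2) ^ z = x ^ (2 * z) := by
  rw [← Real.rpow_natCast_mul hx]; norm_num

lemma lintegral_Ioc_zero_rpow_sub_one {r : ℝ} (hr : 0 < r) {m : ℝ} (hm : 0 ≤ m) :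
    ∫⁻ x in Ioc 0 m, ENNReal.ofReal (x ^ (r - 1)) = ENNReal.ofReal (m ^ r / r) := by
  have hint : IntervalIntegrable (fun x : ℝ => x ^ (r - 1)) volume 0 m :=
    intervalIntegral.intervalIntegrable_rpow' (by linarith)
  rw [← ofReal_integral_eq_lintegral_ofReal
      ((intervalIntegrable_iff_integrableOn_Ioc_of_le hm).mp hint)
      ((ae_restrict_mem measurableSet_Ioc).mono fun x hx => Real.rpow_nonneg hx.1.le _),
    ← intervalIntegral.integral_of_le hm, integral_rpow (Or.inl (by linarith))]
  simp [Real.zero_rpow hr.ne']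

lemma lintegral_Ioi_rpow_neg_sub_one {r : ℝ} (hr : 0 < r) {m : ℝ} (hm : 0 < m) :
    ∫⁻ x in Ioi m, ENNReal.ofReal (x ^ (-r - 1)) = ENNReal.ofReal (m ^ (-r) / r) := by
  rw [← ofReal_integral_eq_lintegral_ofReal (integrableOn_Ioi_rpow_of_lt (by linarith) hm)
      ((ae_restrict_mem measurableSet_Ioi).mono fun x hx => Real.rpow_nonneg (hm.trans hx).le _),
    integral_Ioi_rpow_of_lt (by linarith) hm]
  congr 1
  rw [show -r - 1 + 1 = -r by ring, neg_div_neg_eq]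

lemma ofReal_mul_lintegral_ofReal_mul {β : Type*} [MeasurableSpace β] {ν : Measure β}
    {g w : β → ℝ} (hg0 : 0 ≤ g) {r : ℝ} (hr : 0 ≤ r) :
    ENNReal.ofReal r * ∫⁻ b, ENNReal.ofReal (g b * w b) ∂ν
      = ∫⁻ b, ENNReal.ofReal (g b) * ENNReal.ofReal (r * w b) ∂ν := by
  rw [← lintegral_const_mul' _ _ ENNReal.ofReal_ne_top]
  refine lintegral_congr fun b => ?_
  rw [← ENNReal.ofReal_mul hr, ← ENNReal.ofReal_mul (hg0 b), mul_left_comm]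

section KernelComparison

variable {α β : Type*} [MeasurableSpace α] [MeasurableSpace β] {μ : Measure α} {ν : Measure β}
  [SFinite μ] [SFinite ν] {g w : β → ℝ} {K : α → β → ℝ}

lemma lintegral_lintegral_ofReal_mul_swap (hg : Measurable g) (hg0 : 0 ≤ g)
    (hK : Measurable (Function.uncurry K)) :
    ∫⁻ a, ∫⁻ b, ENNReal.ofReal (g b * K a b) ∂ν ∂μ
      = ∫⁻ b, ENNReal.ofReal (g b) * ∫⁻ a, ENNReal.ofReal (K a b) ∂μ ∂ν := by
  simp_rw [ENNReal.ofReal_mul (hg0 _)]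
  rw [lintegral_lintegral_swap]
  · refine lintegral_congr fun b => lintegral_const_mul _ ?_
    exact (hK.comp (measurable_id.prodMk measurable_const)).ennreal_ofReal
  · exact ((hg.comp measurable_snd).ennreal_ofReal.mul hK.ennreal_ofReal).aemeasurable

/-- If `∫ g w dν = ∞`, the Bochner integral on the right is junk `0`; `htop` makes the inner
integrals on the left junk `0` as well. -/
theorem integral_integral_mul_mem_Icc_of_kernel_bounds {c C : ℝ} (hc : 0 ≤ c) (hC : 0 ≤ C)
    (hg : Measurable g) (hg0 : 0 ≤ g) (hw : Measurable w) (hw0 : 0 ≤ w)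
    (hK : Measurable (Function.uncurry K)) (hK0 : ∀ᵐ a ∂μ, ∀ b, 0 ≤ K a b)
    (hlow : ∀ b, ENNReal.ofReal (c * w b) ≤ ∫⁻ a, ENNReal.ofReal (K a b) ∂μ)
    (hup : ∀ b, ∫⁻ a, ENNReal.ofReal (K a b) ∂μ ≤ ENNReal.ofReal (C * w b))
    (htop : ∀ᵐ a ∂μ, ∫⁻ b, ENNReal.ofReal (g b * w b) ∂ν = ⊤ →
      ∫⁻ b, ENNReal.ofReal (g b * K a b) ∂ν = ⊤) :
    ∫ a, ∫ b, g b * K a b ∂ν ∂μ ∈ Icc (c * ∫ b, g b * w b ∂ν) (C * ∫ b, g b * w b ∂ν) := by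
  set L := ∫⁻ b, ENNReal.ofReal (g b * w b) ∂ν
  set T := fun a => ∫⁻ b, ENNReal.ofReal (g b * K a b) ∂ν
  have hT : Measurable T :=
    ((hg.comp measurable_snd).mul hK).ennreal_ofReal.lintegral_prod_right'
  have hL_eq : ∫ b, g b * w b ∂ν = L.toReal :=
    integral_eq_lintegral_of_nonneg_ae
      (Eventually.of_forall fun b => mul_nonneg (hg0 b) (hw0 b)) (hg.mul hw).aestronglyMeasurable
  have hT_eq : ∀ᵐ a ∂μ, ∫ b, g b * K a b ∂ν = (T a).toReal := hK0.mono fun a ha =>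
    integral_eq_lintegral_of_nonneg_ae (Eventually.of_forall fun b => mul_nonneg (hg0 b) (ha b))
      (hg.mul (hK.comp (measurable_const.prodMk measurable_id))).aestronglyMeasurable
  have hlowE : ENNReal.ofReal c * L ≤ ∫⁻ a, T a ∂μ := by
    rw [ofReal_mul_lintegral_ofReal_mul hg0 hc, lintegral_lintegral_ofReal_mul_swap hg hg0 hK]
    exact lintegral_mono fun b => by gcongr; exact hlow b
  have hupE : ∫⁻ a, T a ∂μ ≤ ENNReal.ofReal C * L := by
    rw [ofReal_mul_lintegral_ofReal_mul hg0 hC, lintegral_lintegral_ofReal_mul_swap hg hg0 hK]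
    exact lintegral_mono fun b => by gcongr; exact hup b
  rw [integral_congr_ae hT_eq, hL_eq]
  by_cases hL : L = ⊤
  · have hT0 : ∀ᵐ a ∂μ, (T a).toReal = 0 := htop.mono fun a ha => by simp [T, ha hL]
    simp [integral_congr_ae hT0, hL]
  · have hfin : ∫⁻ a, T a ∂μ ≠ ⊤ := ne_top_of_le_ne_top (by finiteness) hupE
    rw [integral_toReal hT.aemeasurable (ae_lt_top hT hfin)]
    constructor
    · simpa [ENNReal.toReal_mul, ENNReal.toReal_ofReal hc] using ENNReal.toReal_mono hfin hlowE
    · simpa [ENNReal.toReal_mul, ENNReal.toReal_ofReal hC] using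
        ENNReal.toReal_mono (by finiteness) hupE

end KernelComparison

lemma max_one_abs_sq_le (ξ : ℝ) : max 1 |ξ| ^ 2 ≤ 4 + ξ ^ 2 := by
  rcases max_cases 1 |ξ| with ⟨h, -⟩ | ⟨h, -⟩ <;> rw [h] <;> nlinarith [sq_abs ξ]

lemma le_five_mul_max_one_abs_sq (ξ : ℝ) : 4 + ξ ^ 2 ≤ 5 * max 1 |ξ| ^ 2 := by
  rcases max_cases 1 |ξ| with ⟨h, h'⟩ | ⟨h, h'⟩ <;> rw [h] <;>
    nlinarith [sq_abs ξ, abs_nonneg ξ]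

noncomputable def scaleKernel (s σ ϰ ξ : ℝ) : ℝ :=
  ϰ ^ (2 * (s - σ)) * (4 * ϰ ^ 2 + ξ ^ 2) ^ (-s) / ϰ

section ScaleKernel

variable {s σ : ℝ}

lemma measurable_scaleKernel : Measurable (Function.uncurry (scaleKernel s σ)) := by
  unfold Function.uncurry scaleKernel
  fun_prop

lemma scaleKernel_nonneg {ϰ : ℝ} (hϰ : 0 ≤ ϰ) (ξ : ℝ) : 0 ≤ scaleKernel s σ ϰ ξ := by
  unfold scaleKernel; positivity

lemma Esq_mul_rpow_div_eq_integral (q : ℝ → ℂ) (β : ℝ) {ϰ : ℝ} (hϰ : 0 < ϰ) :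
    Esq s (σ + β) ϰ q * ϰ ^ (2 * β) / ϰ
      = ∫ ξ, |ξ| ^ (2 * (σ + β)) * ‖fhat q ξ‖ ^ 2 * scaleKernel s σ ϰ ξ := by
  have hpow : ϰ ^ (2 * (s - (σ + β))) * ϰ ^ (2 * β) = ϰ ^ (2 * (s - σ)) := by
    rw [← Real.rpow_add hϰ]; ring_nf
  rw [Esq, mul_div_assoc, ← integral_mul_const]
  refine integral_congr_ae (Eventually.of_forall fun ξ => ?_)
  simp only [scaleKernel, ← hpow]
  ring

lemma Esq_one_eq_integral (q : ℝ → ℂ) (σ' : ℝ) :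
    Esq σ σ' 1 q = ∫ ξ, |ξ| ^ (2 * σ') * ‖fhat q ξ‖ ^ 2 * (4 + ξ ^ 2) ^ (-σ) := by
  refine integral_congr_ae (Eventually.of_forall fun ξ => ?_)
  simp only [Real.one_rpow, one_pow, mul_one, one_mul]
  ring

lemma scaleKernel_le (hs : 0 ≤ s) {ϰ ξ b : ℝ} (hϰ : 0 < ϰ) (hb : 0 < b)
    (hbϰ : b ≤ 4 * ϰ ^ 2 + ξ ^ 2) :
    scaleKernel s σ ϰ ξ ≤ ϰ ^ (2 * (s - σ) - 1) * b ^ (-s) := by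
  rw [scaleKernel, Real.rpow_sub_one hϰ.ne', mul_div_right_comm]
  exact mul_le_mul_of_nonneg_left (Real.rpow_le_rpow_of_nonpos hb hbϰ (by linarith))
    (by positivity)

lemma le_scaleKernel_of_mem_Icc (hσs : σ ≤ s) (hs : 0 ≤ s) {m ϰ ξ : ℝ} (hm : 0 < m)
    (hξ : |ξ| ≤ m) (hϰ : ϰ ∈ Icc m (16 * m)) :
    1025 ^ (-s) / 16 * m ^ (-(2 * σ)) / m ≤ scaleKernel s σ ϰ ξ := by
  obtain ⟨hmϰ, hϰm⟩ := hϰ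
  have hϰ0 : 0 < ϰ := hm.trans_le hmϰ
  have hbound : (1025 * m ^ 2) ^ (-s) ≤ (4 * ϰ ^ 2 + ξ ^ 2) ^ (-s) :=
    Real.rpow_le_rpow_of_nonpos (by positivity)
      (by nlinarith [sq_abs ξ, abs_nonneg ξ]) (by linarith)
  calc 1025 ^ (-s) / 16 * m ^ (-(2 * σ)) / m
      = m ^ (2 * (s - σ)) * (1025 * m ^ 2) ^ (-s) / (16 * m) := by
        rw [Real.mul_rpow (by norm_num) (by positivity), Real.sq_rpow hm.le, mul_left_comm,
          ← Real.rpow_add hm]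
        ring_nf
    _ ≤ ϰ ^ (2 * (s - σ)) * (4 * ϰ ^ 2 + ξ ^ 2) ^ (-s) / ϰ := by
        gcongr

lemma le_scaleKernel_of_sq_le_one (hs : 0 ≤ s) {ϰ ξ : ℝ} (hϰ : 0 < ϰ) (hξ : ξ ^ 2 ≤ 1) :
    ϰ ^ (2 * (s - σ)) * (4 * ϰ ^ 2 + 1) ^ (-s) / ϰ ≤ scaleKernel s σ ϰ ξ := by
  have h : (4 * ϰ ^ 2 + 1) ^ (-s) ≤ (4 * ϰ ^ 2 + ξ ^ 2) ^ (-s) :=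
    Real.rpow_le_rpow_of_nonpos (by positivity) (by linarith) (by linarith)
  unfold scaleKernel
  gcongr

lemma setLIntegral_Icc_one_scaleKernel_le (hs : 0 ≤ s) (hσs : σ < s) {m ξ : ℝ} (hm : 0 < m)
    (hmξ : m ^ 2 ≤ 4 + ξ ^ 2) :
    ∫⁻ ϰ in Icc 1 m, ENNReal.ofReal (scaleKernel s σ ϰ ξ)
      ≤ ENNReal.ofReal (m ^ (-(2 * σ)) / (2 * (s - σ))) := calc
  _ ≤ ∫⁻ ϰ in Icc 1 m,
        ENNReal.ofReal (ϰ ^ (2 * (s - σ) - 1)) * ENNReal.ofReal (m ^ (2 * -s)) := by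
      refine setLIntegral_mono (by fun_prop) fun ϰ hϰ => ?_
      have hϰ0 : 0 < ϰ := zero_lt_one.trans_le hϰ.1
      rw [← ENNReal.ofReal_mul (by positivity), ← Real.sq_rpow hm.le]
      exact ENNReal.ofReal_le_ofReal
        (scaleKernel_le hs hϰ0 (by positivity) (by nlinarith [hϰ.1]))
  _ ≤ ∫⁻ ϰ in Ioc 0 m,
        ENNReal.ofReal (ϰ ^ (2 * (s - σ) - 1)) * ENNReal.ofReal (m ^ (2 * -s)) :=
      lintegral_mono_set fun ϰ hϰ => ⟨zero_lt_one.trans_le hϰ.1, hϰ.2⟩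
  _ = ENNReal.ofReal (m ^ (-(2 * σ)) / (2 * (s - σ))) := by
      rw [lintegral_mul_const _ (by fun_prop),
        lintegral_Ioc_zero_rpow_sub_one (by linarith) hm.le,
        ← ENNReal.ofReal_mul (by positivity), div_mul_eq_mul_div, ← Real.rpow_add hm]
      ring_nf

lemma setLIntegral_Ici_scaleKernel_le (hσ : 0 < σ) (hs : 0 ≤ s) {m : ℝ} (hm : 0 < m) (ξ : ℝ) :
    ∫⁻ ϰ in Ici m, ENNReal.ofReal (scaleKernel s σ ϰ ξ)
      ≤ ENNReal.ofReal (4 ^ (-s) * m ^ (-(2 * σ)) / (2 * σ)) := calc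
  _ ≤ ∫⁻ ϰ in Ioi m, ENNReal.ofReal (4 ^ (-s)) * ENNReal.ofReal (ϰ ^ (-(2 * σ) - 1)) := by
      rw [← setLIntegral_congr Ioi_ae_eq_Ici]
      refine setLIntegral_mono (by fun_prop) fun ϰ hϰ => ?_
      have hϰ0 : 0 < ϰ := hm.trans hϰ
      rw [← ENNReal.ofReal_mul (by positivity)]
      refine ENNReal.ofReal_le_ofReal
        ((scaleKernel_le hs hϰ0 (by positivity : 0 < 4 * ϰ ^ 2) (by nlinarith)).trans_eq ?_)
      rw [Real.mul_rpow (by norm_num) (by positivity), Real.sq_rpow hϰ0.le, mul_left_comm,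
        ← Real.rpow_add hϰ0]
      ring_nf
  _ = ENNReal.ofReal (4 ^ (-s) * m ^ (-(2 * σ)) / (2 * σ)) := by
      rw [lintegral_const_mul _ (by fun_prop), lintegral_Ioi_rpow_neg_sub_one (by linarith) hm,
        ← ENNReal.ofReal_mul (by positivity), mul_div_assoc]

lemma setLIntegral_Ici_one_scaleKernel_le (hσ : 0 < σ) (hσs : σ < s) (ξ : ℝ) :
    ∫⁻ ϰ in Ici 1, ENNReal.ofReal (scaleKernel s σ ϰ ξ)
      ≤ ENNReal.ofReal
          (5 ^ σ * (1 / (2 * (s - σ)) + 4 ^ (-s) / (2 * σ)) * (4 + ξ ^ 2) ^ (-σ)) := by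
  set m := max 1 |ξ|
  have hm1 : 1 ≤ m := le_max_left _ _
  have hm : 0 < m := zero_lt_one.trans_le hm1
  have hweight : m ^ (-(2 * σ)) ≤ 5 ^ σ * (4 + ξ ^ 2) ^ (-σ) := by
    have h := Real.rpow_le_rpow_of_nonpos (by positivity) (le_five_mul_max_one_abs_sq ξ)
      (by linarith : -σ ≤ 0)
    rw [Real.mul_rpow (by norm_num) (by positivity), Real.sq_rpow hm.le] at h
    calc m ^ (-(2 * σ)) = 5 ^ σ * (5 ^ (-σ) * m ^ (2 * -σ)) := by
          rw [← mul_assoc, ← Real.rpow_add (by norm_num), add_neg_cancel, Real.rpow_zero,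
            one_mul]
          ring_nf
      _ ≤ 5 ^ σ * (4 + ξ ^ 2) ^ (-σ) := by gcongr
  rw [← Icc_union_Ici_eq_Ici hm1]
  refine (lintegral_union_le _ _ _).trans <| (add_le_add
    (setLIntegral_Icc_one_scaleKernel_le (hσ.le.trans hσs.le) hσs hm (max_one_abs_sq_le ξ))
    (setLIntegral_Ici_scaleKernel_le hσ (hσ.le.trans hσs.le) hm ξ)).trans ?_
  rw [← ENNReal.ofReal_add (by positivity) (by positivity)]
  refine ENNReal.ofReal_le_ofReal ?_
  calc m ^ (-(2 * σ)) / (2 * (s - σ)) + 4 ^ (-s) * m ^ (-(2 * σ)) / (2 * σ)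
      = m ^ (-(2 * σ)) * (1 / (2 * (s - σ)) + 4 ^ (-s) / (2 * σ)) := by ring
    _ ≤ 5 ^ σ * (4 + ξ ^ 2) ^ (-σ) * (1 / (2 * (s - σ)) + 4 ^ (-s) / (2 * σ)) := by gcongr
    _ = _ := by ring

lemma le_setLIntegral_Icc_scaleKernel (hσs : σ ≤ s) (hs : 0 ≤ s) {m p ξ : ℝ} (hm : 0 < m)
    (hξ : |ξ| ≤ m) (hmp : m ≤ p) (hpm : p + m ≤ 16 * m) :
    ENNReal.ofReal (1025 ^ (-s) / 16 * m ^ (-(2 * σ)))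
      ≤ ∫⁻ ϰ in Icc p (p + m), ENNReal.ofReal (scaleKernel s σ ϰ ξ) := calc
  _ = ∫⁻ _ in Icc p (p + m), ENNReal.ofReal (1025 ^ (-s) / 16 * m ^ (-(2 * σ)) / m) := by
      rw [setLIntegral_const, Real.volume_Icc, ← ENNReal.ofReal_mul (by positivity),
        add_sub_cancel_left, div_mul_cancel₀ _ hm.ne']
  _ ≤ _ := setLIntegral_mono (by unfold scaleKernel; fun_prop) fun ϰ hϰ =>
      ENNReal.ofReal_le_ofReal
        (le_scaleKernel_of_mem_Icc hσs hs hm hξ ⟨hmp.trans hϰ.1, hϰ.2.trans hpm⟩)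

lemma le_setLIntegral_scaleKernel (hσ : 0 ≤ σ) (hσs : σ ≤ s) (κ ξ : ℝ) :
    ENNReal.ofReal (1025 ^ (-s) / 16 * (4 + ξ ^ 2) ^ (-σ))
      ≤ ∫⁻ ϰ in Icc 1 (κ / 2) ∪ Ici (2 * κ), ENNReal.ofReal (scaleKernel s σ ϰ ξ) := by
  set m := max 1 |ξ|
  have hm1 : 1 ≤ m := le_max_left _ _
  have hm : 0 < m := zero_lt_one.trans_le hm1
  have hweight : (4 + ξ ^ 2) ^ (-σ) ≤ m ^ (-(2 * σ)) := by
    rw [show -(2 * σ) = 2 * -σ by ring, ← Real.sq_rpow hm.le]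
    exact Real.rpow_le_rpow_of_nonpos (by positivity) (max_one_abs_sq_le ξ) (by linarith)
  refine (ENNReal.ofReal_le_ofReal
    (by gcongr : _ ≤ 1025 ^ (-s) / 16 * m ^ (-(2 * σ)))).trans ?_
  by_cases hsmall : 2 * m ≤ κ / 2
  · have hsub : Icc m (m + m) ⊆ Icc 1 (κ / 2) := Icc_subset_Icc hm1 (by linarith)
    exact (le_setLIntegral_Icc_scaleKernel hσs (hσ.trans hσs) hm (le_max_right _ _) le_rfl
      (by linarith)).trans (lintegral_mono_set (hsub.trans subset_union_left))
  · have hsub : Icc (8 * m) (8 * m + m) ⊆ Ici (2 * κ) :=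
      Icc_subset_Ici_self.trans (Ici_subset_Ici.mpr (by linarith))
    exact (le_setLIntegral_Icc_scaleKernel hσs (hσ.trans hσs) hm (le_max_right _ _)
      (by linarith) (by linarith)).trans (lintegral_mono_set (hsub.trans subset_union_right))

end ScaleKernel

/-- The Schwartz decay of `F` confines any divergence of the left-hand side to the unit ball,
where `scaleKernel s σ ϰ` is bounded below. -/
lemma lintegral_mul_scaleKernel_eq_top {s σ : ℝ} (hσ : 0 ≤ σ) (hs : 0 ≤ s)
    (F : SchwartzMap ℝ ℂ) (c : ℝ) {ϰ : ℝ} (hϰ : 0 < ϰ)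
    (h : ∫⁻ ξ, ENNReal.ofReal (|ξ| ^ c * ‖F ξ‖ ^ 2 * (4 + ξ ^ 2) ^ (-σ)) = ⊤) :
    ∫⁻ ξ, ENNReal.ofReal (|ξ| ^ c * ‖F ξ‖ ^ 2 * scaleKernel s σ ϰ ξ) = ⊤ := by
  set B := Metric.closedBall (0 : ℝ) 1
  set ε := ϰ ^ (2 * (s - σ)) * (4 * ϰ ^ 2 + 1) ^ (-s) / ϰ
  have hε : 0 < ε := by positivity
  have hG : ∀ ξ, 0 ≤ |ξ| ^ c * ‖F ξ‖ ^ 2 := fun ξ => by positivity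
  have hw_le : ∀ ξ : ℝ, (4 + ξ ^ 2) ^ (-σ) ≤ 1 := fun ξ =>
    Real.rpow_le_one_of_one_le_of_nonpos (by nlinarith) (by linarith)
  have htail :
      ∫⁻ ξ in Bᶜ, ENNReal.ofReal (|ξ| ^ c * ‖F ξ‖ ^ 2 * (4 + ξ ^ 2) ^ (-σ)) < ⊤ := by
    refine lt_of_le_of_lt (setLIntegral_mono' measurableSet_closedBall.compl fun ξ _ =>
      ENNReal.ofReal_le_ofReal (mul_le_of_le_one_right (hG ξ) (hw_le ξ))) ?_
    simpa [Real.norm_eq_abs] using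
      (F.integrableOn_rpow_mul_norm_sq_compl_closedBall volume c).setLIntegral_lt_top
  have hball : ∫⁻ ξ in B, ENNReal.ofReal (|ξ| ^ c * ‖F ξ‖ ^ 2 * (4 + ξ ^ 2) ^ (-σ))
      ≤ ENNReal.ofReal ε⁻¹
        * ∫⁻ ξ, ENNReal.ofReal (|ξ| ^ c * ‖F ξ‖ ^ 2 * scaleKernel s σ ϰ ξ) := by
    rw [← lintegral_const_mul' _ _ ENNReal.ofReal_ne_top]
    refine (setLIntegral_mono' measurableSet_closedBall fun ξ hξ => ?_).trans
      (setLIntegral_le_lintegral _ _)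
    have hξ2 : ξ ^ 2 ≤ 1 := by
      rw [Metric.mem_closedBall, dist_zero_right, Real.norm_eq_abs] at hξ
      nlinarith [sq_abs ξ, abs_nonneg ξ]
    rw [← ENNReal.ofReal_mul (by positivity)]
    refine ENNReal.ofReal_le_ofReal ?_
    calc |ξ| ^ c * ‖F ξ‖ ^ 2 * (4 + ξ ^ 2) ^ (-σ) ≤ |ξ| ^ c * ‖F ξ‖ ^ 2 * 1 := by
          gcongr; exact hw_le ξ
      _ ≤ |ξ| ^ c * ‖F ξ‖ ^ 2 * (ε⁻¹ * scaleKernel s σ ϰ ξ) := by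
          gcongr
          rw [le_inv_mul_iff₀ hε, mul_one]
          exact le_scaleKernel_of_sq_le_one hs hϰ hξ2
      _ = _ := by ring
  by_contra hne
  rw [← lintegral_add_compl _ measurableSet_closedBall] at h
  exact (ENNReal.add_lt_top.mpr ⟨hball.trans_lt (ENNReal.mul_lt_top ENNReal.ofReal_lt_top
    (lt_top_iff_ne_top.mpr hne)), htail⟩).ne h

/-- **Integrated equicontinuity norms (punctured version).** For `s > σ > 0` and
`β ∈ ℝ` there are `0 < c ≤ C` so that for all `κ ≥ 2` and Schwartz `q`, with
`I_κ = [1, κ/2] ∪ [2κ, ∞)`,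
`c ‖q‖²_{E^{σ+β}_{σ,1}} ≤ ∫_{I_κ} ‖q‖²_{E^{σ+β}_{s,ϰ}} ϰ^{2β} dϰ/ϰ
  ≤ C ‖q‖²_{E^{σ+β}_{σ,1}}`. -/
theorem stmt_12 (s σ β : ℝ) (hσ : 0 < σ) (hs : σ < s) :
    ∃ c C : ℝ, 0 < c ∧ c ≤ C ∧
      ∀ κ : ℝ, 2 ≤ κ → ∀ q : SchwartzMap ℝ ℂ,
        (c * Esq σ (σ + β) 1 ⇑q
            ≤ ∫ ϰ in Set.Icc 1 (κ / 2) ∪ Set.Ici (2 * κ),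
                Esq s (σ + β) ϰ ⇑q * ϰ ^ (2 * β) / ϰ) ∧
        ((∫ ϰ in Set.Icc 1 (κ / 2) ∪ Set.Ici (2 * κ),
                Esq s (σ + β) ϰ ⇑q * ϰ ^ (2 * β) / ϰ)
            ≤ C * Esq σ (σ + β) 1 ⇑q) := by
  set c : ℝ := 1025 ^ (-s) / 16
  set C : ℝ := 5 ^ σ * (1 / (2 * (s - σ)) + 4 ^ (-s) / (2 * σ))
  have hc : 0 < c := by positivity
  have hsub (κ : ℝ) (hκ : 1 ≤ 2 * κ) : Icc 1 (κ / 2) ∪ Ici (2 * κ) ⊆ Ici 1 :=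
    union_subset Icc_subset_Ici_self (Ici_subset_Ici.mpr hκ)
  have hup (κ : ℝ) (hκ : 1 ≤ 2 * κ) (ξ : ℝ) :
      ∫⁻ ϰ in Icc 1 (κ / 2) ∪ Ici (2 * κ), ENNReal.ofReal (scaleKernel s σ ϰ ξ)
        ≤ ENNReal.ofReal (C * (4 + ξ ^ 2) ^ (-σ)) :=
    (lintegral_mono_set (hsub κ hκ)).trans (setLIntegral_Ici_one_scaleKernel_le hσ hs ξ)
  have hcC : c ≤ C := by
    have h := (le_setLIntegral_scaleKernel hσ.le hs.le 2 0).trans (hup 2 (by norm_num) 0)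
    rw [ENNReal.ofReal_le_ofReal_iff (by positivity)] at h
    exact le_of_mul_le_mul_right h (by positivity)
  refine ⟨c, C, hc, hcC, fun κ hκ q => ?_⟩
  obtain ⟨F, hF⟩ := exists_schwartzMap_eq_fhat q
  have hS : MeasurableSet (Icc 1 (κ / 2) ∪ Ici (2 * κ)) :=
    measurableSet_Icc.union measurableSet_Ici
  have hpos : ∀ ϰ ∈ Icc 1 (κ / 2) ∪ Ici (2 * κ), 0 < ϰ :=
    fun ϰ hϰ => zero_lt_one.trans_le (hsub κ (by linarith) hϰ)
  rw [setIntegral_congr_fun hS fun ϰ hϰ => Esq_mul_rpow_div_eq_integral _ β (hpos ϰ hϰ),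
    Esq_one_eq_integral, ← hF]
  exact integral_integral_mul_mem_Icc_of_kernel_bounds hc.le (hc.le.trans hcC)
    ((measurable_abs.pow_const _).mul (F.continuous.norm.pow 2).measurable)
    (fun ξ => by positivity) (by fun_prop) (fun ξ => by positivity) measurable_scaleKernel
    ((ae_restrict_mem hS).mono fun ϰ hϰ => scaleKernel_nonneg (hpos ϰ hϰ).le)
    (le_setLIntegral_scaleKernel hσ.le hs.le κ) (hup κ (by linarith))
    ((ae_restrict_mem hS).mono fun ϰ hϰ =>
      lintegral_mul_scaleKernel_eq_top hσ.le (hσ.trans hs).le F _ (hpos ϰ hϰ))
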